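/- arXiv:1809.06874 — 2 statements merged into one kernel-verified Lean document; each statement's English description precedes it below -/
import Mathlib

section
/- The function f(R) = (2cos R + 1)/(2cos²R + 2cos R + 1) is strictly increasing on the interval (0, π/2). -/
/-!
Writing `c = cos R`, the function is `g(c) = (2c + 1)/(2c² + 2c + 1)`, and cross-multiplying gives
`(2a + 1)(2b² + 2b + 1) - (2b + 1)(2a² + 2a + 1) = 2(b - a)(2ab + a + b)`, so `g` is strictly
decreasing for `c ≥ 0`. Since `cos` is strictly decreasing on `[0, π]` and nonnegative on `(0, π/2)`,
the composite is strictly increasing there.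
-/

open Real

lemma strictAntiOn_two_mul_add_one_div_quadratic :
    StrictAntiOn (fun c : ℝ => (2 * c + 1) / (2 * c ^ 2 + 2 * c + 1)) (Set.Ici 0) := by
  intro a (ha : 0 ≤ a) b (hb : 0 ≤ b) hab
  have key : (2 * a + 1) * (2 * b ^ 2 + 2 * b + 1) - (2 * b + 1) * (2 * a ^ 2 + 2 * a + 1)
      = 2 * (b - a) * (2 * a * b + a + b) := by ring
  have hpos : 0 < 2 * (b - a) * (2 * a * b + a + b) :=
    mul_pos (by linarith) (by nlinarith)
  show (2 * b + 1) / (2 * b ^ 2 + 2 * b + 1) < (2 * a + 1) / (2 * a ^ 2 + 2 * a + 1)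
  rw [div_lt_div_iff₀ (by positivity) (by positivity)]
  linarith

lemma mapsTo_cos_Ioo_zero_pi_div_two_Ici_zero : Set.MapsTo cos (Set.Ioo 0 (π / 2)) (Set.Ici 0) :=
  fun _ hx => cos_nonneg_of_mem_Icc ⟨by linarith [hx.1, pi_pos], hx.2.le⟩

/-- `f(R) = (2cos R + 1)/(2cos²R + 2cos R + 1)` is strictly increasing on `(0, π/2)`. -/
theorem stmt_1 :
    StrictMonoOn (fun R : ℝ => (2 * Real.cos R + 1) / (2 * Real.cos R ^ 2 + 2 * Real.cos R + 1))
      (Set.Ioo 0 (π / 2)) :=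
  strictAntiOn_two_mul_add_one_div_quadratic.comp
    (strictAntiOn_cos.mono fun _ hx => ⟨hx.1.le, by linarith [hx.2, pi_pos]⟩)
    mapsTo_cos_Ioo_zero_pi_div_two_Ici_zero
end

section
/- For any t > 0 and n ≥ 1, ∫_0^π t^{2n} sin^{2n−1}(φ) / (t²(1+cos φ) + (1−cos φ))^{2n} dφ ≤ 4^{1−n} · ∫_0^π t² sin(φ)/(t²(1+cos φ)+(1−cos φ))² dφ = 2^{1−2n}. -/
open Real

/-!
With `D = t²(1 + cos φ) + (1 - cos φ)`, the half-angle formulas give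
`D - 2 t sin φ = 2 (t cos (φ/2) - sin (φ/2))²`, so `t sin φ / D ≤ 1/2` on `[0, π]`. Hence the
`n`-th integrand is the `n = 1` integrand times `(t sin φ / D)^(2n-2) ≤ 4^(1-n)`. The `n = 1`
integrand has the explicit antiderivative `(1 - cos φ) / (2 D)`, whence its integral is `1/2`.
-/

noncomputable def denom (t φ : ℝ) : ℝ := t ^ 2 * (1 + cos φ) + (1 - cos φ)

lemma denom_eq_half_angle (t φ : ℝ) :
    denom t φ = 2 * ((t * cos (φ / 2)) ^ 2 + sin (φ / 2) ^ 2) := by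
  have hc : cos φ = cos (2 * (φ / 2)) := by congr 1; ring
  rw [denom, hc, cos_two_mul]
  nlinarith [sin_sq_add_cos_sq (φ / 2)]

lemma denom_pos {t : ℝ} (ht : t ≠ 0) (φ : ℝ) : 0 < denom t φ := by
  rw [denom_eq_half_angle]
  have : sin (φ / 2) ≠ 0 ∨ t * cos (φ / 2) ≠ 0 := by
    by_contra! h
    have := sin_sq_add_cos_sq (φ / 2)
    simp_all
  rcases this with h | h <;> positivity

lemma two_mul_mul_sin_le_denom (t φ : ℝ) : 2 * t * sin φ ≤ denom t φ := by
  have hs : sin φ = sin (2 * (φ / 2)) := by congr 1; ring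
  rw [denom_eq_half_angle, hs, sin_two_mul]
  nlinarith [sq_nonneg (t * cos (φ / 2) - sin (φ / 2))]

@[fun_prop]
lemma continuous_denom (t : ℝ) : Continuous (denom t) := by
  unfold denom
  fun_prop

lemma continuous_div_denom_pow {f : ℝ → ℝ} (hf : Continuous f) {t : ℝ} (ht : t ≠ 0) (k : ℕ) :
    Continuous fun φ => f φ / denom t φ ^ k :=
  hf.div (by fun_prop) fun φ => pow_ne_zero k (denom_pos ht φ).ne'

lemma hasDerivAt_one_sub_cos_div_denom {t : ℝ} (ht : t ≠ 0) (φ : ℝ) :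
    HasDerivAt (fun x => (1 - cos x) / (2 * denom t x))
      (t ^ 2 * sin φ / denom t φ ^ 2) φ := by
  have hu : HasDerivAt (fun x => 1 - cos x) (sin φ) φ := by
    simpa using (hasDerivAt_cos φ).const_sub 1
  have hv : HasDerivAt (fun x => 2 * denom t x) (2 * (t ^ 2 * -sin φ + sin φ)) φ := by
    unfold denom
    exact (((((hasDerivAt_cos φ).const_add 1).const_mul (t ^ 2)).add
      ((hasDerivAt_cos φ).const_sub 1)).const_mul 2).congr_deriv (by ring)
  have hD := (denom_pos ht φ).ne'
  refine (hu.div hv (by positivity)).congr_deriv ?_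
  rw [div_eq_div_iff (by positivity) (by positivity)]
  unfold denom
  ring

lemma integral_sin_div_denom_sq {t : ℝ} (ht : t ≠ 0) :
    ∫ φ in (0 : ℝ)..π, t ^ 2 * sin φ / denom t φ ^ 2 = 1 / 2 := by
  rw [intervalIntegral.integral_eq_sub_of_hasDerivAt
    (fun φ _ => hasDerivAt_one_sub_cos_div_denom ht φ)]
  · norm_num [denom]
  · exact (continuous_div_denom_pow (by fun_prop) ht 2).intervalIntegrable _ _

lemma pow_mul_pow_div_pow_le {a s D : ℝ} (ha : 0 ≤ a) (hs : 0 ≤ s) (hD : 0 < D)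
    (h : 2 * a * s ≤ D) {n : ℕ} (hn : 1 ≤ n) :
    a ^ (2 * n) * s ^ (2 * n - 1) / D ^ (2 * n) ≤ (4 : ℝ) ^ (1 - (n : ℤ)) * (a ^ 2 * s / D ^ 2) := by
  obtain ⟨m, rfl⟩ : ∃ m, n = m + 1 := ⟨n - 1, by omega⟩
  have hsplit : a ^ (2 * (m + 1)) * s ^ (2 * (m + 1) - 1) / D ^ (2 * (m + 1))
      = (a ^ 2 * s / D ^ 2) * ((a * s / D) ^ 2) ^ m := by
    rw [show 2 * (m + 1) - 1 = 2 * m + 1 by omega, ← pow_mul, div_pow, mul_pow]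
    field_simp
    ring
  have hfour : (4 : ℝ) ^ (1 - ((m + 1 : ℕ) : ℤ)) = (1 / 4) ^ m := by
    rw [show 1 - ((m + 1 : ℕ) : ℤ) = -m by push_cast; ring, zpow_neg, zpow_natCast, one_div, inv_pow]
  have hratio : (a * s / D) ^ 2 ≤ 1 / 4 := by
    have : a * s / D ≤ 1 / 2 := by rw [div_le_iff₀ hD]; linarith
    have : 0 ≤ a * s / D := by positivity
    nlinarith
  rw [hsplit, hfour, mul_comm ((1 / 4 : ℝ) ^ m)]
  gcongr

/-- For `t > 0` and `n ≥ 1`,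
`∫_0^π t^{2n} sin^{2n−1}φ / (t²(1+cos φ)+(1−cos φ))^{2n} dφ
  ≤ 4^{1−n} ∫_0^π t² sin φ/(t²(1+cos φ)+(1−cos φ))² dφ = 2^{1−2n}`. -/
theorem stmt_5 (t : ℝ) (ht : 0 < t) (n : ℕ) (hn : 1 ≤ n) :
    (∫ φ in (0 : ℝ)..π,
        t ^ (2 * n) * Real.sin φ ^ (2 * n - 1) /
          (t ^ 2 * (1 + Real.cos φ) + (1 - Real.cos φ)) ^ (2 * n))
      ≤ (4 : ℝ) ^ (1 - (n : ℤ)) *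
        ∫ φ in (0 : ℝ)..π,
          t ^ 2 * Real.sin φ / (t ^ 2 * (1 + Real.cos φ) + (1 - Real.cos φ)) ^ 2 ∧
    (4 : ℝ) ^ (1 - (n : ℤ)) *
        (∫ φ in (0 : ℝ)..π,
          t ^ 2 * Real.sin φ / (t ^ 2 * (1 + Real.cos φ) + (1 - Real.cos φ)) ^ 2)
      = (2 : ℝ) ^ (1 - 2 * (n : ℤ)) := by
  change (∫ φ in (0 : ℝ)..π, t ^ (2 * n) * sin φ ^ (2 * n - 1) / denom t φ ^ (2 * n))
      ≤ (4 : ℝ) ^ (1 - (n : ℤ)) * ∫ φ in (0 : ℝ)..π, t ^ 2 * sin φ / denom t φ ^ 2 ∧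
    (4 : ℝ) ^ (1 - (n : ℤ)) * (∫ φ in (0 : ℝ)..π, t ^ 2 * sin φ / denom t φ ^ 2)
      = (2 : ℝ) ^ (1 - 2 * (n : ℤ))
  refine ⟨?_, ?_⟩
  · rw [← intervalIntegral.integral_const_mul]
    refine intervalIntegral.integral_mono_on pi_pos.le
      ((continuous_div_denom_pow (by fun_prop) ht.ne' _).intervalIntegrable _ _)
      (((continuous_div_denom_pow (by fun_prop) ht.ne' 2).const_mul _).intervalIntegrable _ _)
      fun φ hφ => ?_
    exact pow_mul_pow_div_pow_le ht.le (sin_nonneg_of_nonneg_of_le_pi hφ.1 hφ.2)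
      (denom_pos ht.ne' φ) (two_mul_mul_sin_le_denom t φ) hn
  · rw [integral_sin_div_denom_sq ht.ne', show (4 : ℝ) = 2 ^ (2 : ℤ) by norm_num, ← zpow_mul,
      one_div, ← zpow_neg_one, ← zpow_add₀ two_ne_zero]
    ring_nf
end
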